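/- arXiv:2004.00566 — 4 statements merged into one kernel-verified Lean document; each statement's English description precedes it below -/
import Mathlib

section
/- Let P_A and P_B be orthogonal projections onto subspaces U and V of a finite-dimensional real inner product space. For any vector y, define the residual sequence r_0 = y, r_{k+1} = (I - P_B)(I - P_A) r_k. Then r_k converges to the orthogonal projection of y onto the orthogonal complement of U + V. -/
open Submodule Filter Topology

noncomputable def proj {E : Type*} [NormedAddCommGroup E] [InnerProductSpace ℝ E]
    [FiniteDimensional ℝ E] (U : Submodule ℝ E) : E →ₗ[ℝ] E :=
  U.subtype ∘ₗ (orthogonalProjection U).toLinearMap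

/-!
Write `T = P_{Vᗮ} ∘ P_{Uᗮ}`, so that `r k = T ^ k y`. This `T` is a contraction which is isometric
only on its fixed vectors, and these form `Uᗮ ⊓ Vᗮ = (U ⊔ V)ᗮ =: W`. A vector fixed by a contraction
is also fixed by its adjoint, so `T` preserves `Wᗮ`, and there it strictly shrinks every nonzero
vector. By compactness of the unit ball in finite dimension, `T` restricted to `Wᗮ` has operator
norm `< 1`, so `T ^ k → 0` on `Wᗮ` while `T ^ k` is the identity on `W`.
-/

namespace ContinuousLinearMap

section Normed

variable {𝕜 E F : Type*} [DenselyNormedField 𝕜] [NormedAddCommGroup E] [NormedSpace 𝕜 E]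
  [NormedAddCommGroup F] [NormedSpace 𝕜 F]

theorem exists_norm_apply_eq_opNorm [ProperSpace E] (f : E →L[𝕜] F) :
    ∃ z, ‖z‖ ≤ 1 ∧ ‖f z‖ = ‖f‖ := by
  have hcompact : IsCompact ((fun x => ‖f x‖) '' Metric.closedBall 0 1) :=
    (isCompact_closedBall 0 1).image (by fun_prop)
  have hmem := hcompact.sSup_mem ((Metric.nonempty_closedBall.2 zero_le_one).image _)
  rw [f.sSup_unitClosedBall_eq_norm] at hmem
  obtain ⟨z, hz, hfz⟩ := hmem
  exact ⟨z, mem_closedBall_zero_iff.1 hz, hfz⟩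

theorem opNorm_lt_one_of_norm_apply_lt [ProperSpace E] {f : E →L[𝕜] F}
    (hf : ∀ x ≠ 0, ‖f x‖ < ‖x‖) : ‖f‖ < 1 := by
  obtain ⟨z, hz, hfz⟩ := f.exists_norm_apply_eq_opNorm
  rw [← hfz]
  rcases eq_or_ne z 0 with rfl | hz0
  · simp
  · exact (hf z hz0).trans_le hz

theorem tendsto_pow_apply_zero_of_norm_apply_lt [ProperSpace E] {f : E →L[𝕜] E}
    (hf : ∀ x ≠ 0, ‖f x‖ < ‖x‖) (x : E) :
    Tendsto (fun k => (f ^ k) x) atTop (𝓝 0) := by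
  simpa only [Function.comp_def, apply_apply, zero_apply] using
    ((apply 𝕜 E x).continuous.tendsto 0).comp
      (tendsto_pow_atTop_nhds_zero_of_norm_lt_one (opNorm_lt_one_of_norm_apply_lt hf))

theorem restrict_pow_apply (f : E →L[𝕜] E) {K : Submodule 𝕜 E} (hK : ∀ x ∈ K, f x ∈ K)
    (k : ℕ) (x : K) : ((f.restrict hK ^ k) x : E) = (f ^ k) x := by
  induction k with
  | zero => rfl
  | succ k ih =>
    rw [pow_succ', pow_succ']
    exact congrArg f ih

theorem tendsto_pow_apply_zero_of_mapsTo {f : E →L[𝕜] E} {K : Submodule 𝕜 E} [ProperSpace K]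
    (hK : ∀ x ∈ K, f x ∈ K) (hf : ∀ x ∈ K, x ≠ 0 → ‖f x‖ < ‖x‖) {x : E} (hx : x ∈ K) :
    Tendsto (fun k => (f ^ k) x) atTop (𝓝 0) := by
  have hrestrict : ∀ x : K, x ≠ 0 → ‖f.restrict hK x‖ < ‖x‖ := fun x hx =>
    hf x x.2 (by simpa using hx)
  simpa only [Function.comp_def, restrict_pow_apply, ZeroMemClass.coe_zero] using
    (continuous_subtype_val.tendsto 0).comp
      (tendsto_pow_apply_zero_of_norm_apply_lt hrestrict ⟨x, hx⟩)

end Normed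

variable {𝕜 E : Type*} [RCLike 𝕜] [NormedAddCommGroup E] [InnerProductSpace 𝕜 E]

theorem adjoint_apply_eq_self_of_apply_eq_self [CompleteSpace E] {f : E →L[𝕜] E}
    (hf : ‖f‖ ≤ 1) {x : E} (hx : f x = x) : adjoint f x = x := by
  refine eq_of_norm_le_re_inner_eq_norm_sq (𝕜 := 𝕜) ?_ ?_
  · calc ‖adjoint f x‖ ≤ ‖adjoint f‖ * ‖x‖ := le_opNorm _ _
      _ ≤ 1 * ‖x‖ := by gcongr; simpa using hf
      _ = ‖x‖ := one_mul _
  · rw [← inner_conj_symm, adjoint_inner_right, hx, RCLike.conj_re, inner_self_eq_norm_sq]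

theorem mapsTo_orthogonal_eqLocus_one [CompleteSpace E] {f : E →L[𝕜] E} (hf : ‖f‖ ≤ 1) :
    ∀ x ∈ (f.eqLocus (1 : E →L[𝕜] E))ᗮ, f x ∈ (f.eqLocus (1 : E →L[𝕜] E))ᗮ := by
  intro x hx w hw
  rw [← adjoint_inner_left, adjoint_apply_eq_self_of_apply_eq_self hf hw]
  exact hx w hw

theorem tendsto_pow_apply_starProjection_eqLocus_one [FiniteDimensional 𝕜 E] {f : E →L[𝕜] E}
    (hf : ‖f‖ ≤ 1) (hrigid : ∀ x, ‖f x‖ = ‖x‖ → f x = x) (x : E) :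
    Tendsto (fun k => (f ^ k) x) atTop (𝓝 ((f.eqLocus (1 : E →L[𝕜] E)).starProjection x)) := by
  have := FiniteDimensional.complete 𝕜 E
  set W := f.eqLocus (1 : E →L[𝕜] E)
  have hfixed : ∀ k, (f ^ k) (W.starProjection x) = W.starProjection x := fun k => by
    rw [FunLike.coe_pow_eq_iterate]
    exact Function.iterate_fixed (W.starProjection_apply_mem x) k
  have hcontract : ∀ z ∈ Wᗮ, z ≠ 0 → ‖f z‖ < ‖z‖ := by
    intro z hz hz0
    refine (by simpa using f.le_of_opNorm_le hf z : ‖f z‖ ≤ ‖z‖).lt_of_ne fun hnorm => hz0 ?_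
    exact inner_self_eq_zero.1 (W.inner_right_of_mem_orthogonal (hrigid z hnorm) hz)
  have hsplit : ∀ k, (f ^ k) x = W.starProjection x + (f ^ k) (Wᗮ.starProjection x) := fun k => by
    conv_lhs => rw [← W.starProjection_add_starProjection_orthogonal x]
    rw [map_add, hfixed]
  simp_rw [hsplit]
  simpa using tendsto_const_nhds.add (tendsto_pow_apply_zero_of_mapsTo
    (mapsTo_orthogonal_eqLocus_one hf) hcontract (Wᗮ.starProjection_apply_mem x))

end ContinuousLinearMap

namespace Submodule

variable {𝕜 E : Type*} [RCLike 𝕜] [NormedAddCommGroup E] [InnerProductSpace 𝕜 E]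
  (A B : Submodule 𝕜 E) [A.HasOrthogonalProjection] [B.HasOrthogonalProjection]

theorem mem_inf_of_norm_starProjection_starProjection_eq {x : E}
    (h : ‖B.starProjection (A.starProjection x)‖ = ‖x‖) : x ∈ A ⊓ B := by
  have hA : ‖A.starProjection x‖ = ‖x‖ := le_antisymm (A.norm_starProjection_apply_le x)
    (h ▸ B.norm_starProjection_apply_le _)
  have hxA : x ∈ A := (A.mem_iff_norm_starProjection x).2 hA
  rw [starProjection_eq_self_iff.2 hxA] at h
  exact ⟨hxA, (B.mem_iff_norm_starProjection x).2 h⟩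

theorem norm_starProjection_comp_starProjection_le_one :
    ‖B.starProjection ∘L A.starProjection‖ ≤ 1 :=
  (ContinuousLinearMap.opNorm_comp_le _ _).trans <|
    mul_le_one₀ B.starProjection_norm_le (norm_nonneg _) A.starProjection_norm_le

theorem starProjection_starProjection_eq_self_of_norm_eq {x : E}
    (h : ‖B.starProjection (A.starProjection x)‖ = ‖x‖) :
    B.starProjection (A.starProjection x) = x := by
  obtain ⟨hxA, hxB⟩ := mem_inf_of_norm_starProjection_starProjection_eq A B h
  rw [starProjection_eq_self_iff.2 hxA, starProjection_eq_self_iff.2 hxB]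

theorem eqLocus_starProjection_comp_starProjection_one :
    (B.starProjection ∘L A.starProjection).eqLocus (1 : E →L[𝕜] E) = A ⊓ B := by
  ext x
  refine ⟨fun hx => mem_inf_of_norm_starProjection_starProjection_eq A B ?_, fun ⟨hxA, hxB⟩ => ?_⟩
  · exact congrArg norm hx
  · show B.starProjection (A.starProjection x) = x
    rw [starProjection_eq_self_iff.2 hxA, starProjection_eq_self_iff.2 hxB]

end Submodule

section

variable {E : Type*} [NormedAddCommGroup E] [InnerProductSpace ℝ E] [FiniteDimensional ℝ E]

theorem proj_apply (K : Submodule ℝ E) (x : E) : proj K x = K.starProjection x := rfl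

theorem id_sub_proj_apply (K : Submodule ℝ E) (x : E) :
    (LinearMap.id - proj K : Module.End ℝ E) x = Kᗮ.starProjection x :=
  (starProjection_orthogonal_val x).symm

end

theorem stmt0 {E : Type*} [NormedAddCommGroup E] [InnerProductSpace ℝ E] [FiniteDimensional ℝ E]
    (U V : Submodule ℝ E) (y : E) (r : ℕ → E) (hr0 : r 0 = y)
    (hr : ∀ k, r (k + 1) = (LinearMap.id - proj V : Module.End ℝ E) ((LinearMap.id - proj U : Module.End ℝ E) (r k))) :
    Tendsto r atTop (𝓝 (proj (U ⊔ V)ᗮ y)) := by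
  set T := Vᗮ.starProjection ∘L Uᗮ.starProjection
  have hrT : r = fun k => (T ^ k) y := funext fun k => by
    induction k with
    | zero => simpa using hr0
    | succ k ih => rw [hr, ih, id_sub_proj_apply, id_sub_proj_apply, pow_succ']; rfl
  have hlim := ContinuousLinearMap.tendsto_pow_apply_starProjection_eqLocus_one
    (norm_starProjection_comp_starProjection_le_one Uᗮ Vᗮ)
    (fun _ => starProjection_starProjection_eq_self_of_norm_eq Uᗮ Vᗮ) y
  rw [eqLocus_starProjection_comp_starProjection_one, inf_orthogonal, ← hrT] at hlim
  rwa [proj_apply]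
end

section
/- Let U and V be subspaces of a finite-dimensional real inner product space with orthogonal projections P_A and P_B. There exists a constant c in [0,1) such that for every y in U+V, the norm of ((I-P_B)(I-P_A))^k y is at most c^k times the norm of y. -/
open Submodule Filter Topology

lemma proj_pythag {E : Type*} [NormedAddCommGroup E] [InnerProductSpace ℝ E]
    [FiniteDimensional ℝ E] (K : Submodule ℝ E) (x : E) :
    ‖x - proj K x‖ ^ 2 + ‖proj K x‖ ^ 2 = ‖x‖ ^ 2 := by
  have h0 : (inner ℝ (x - proj K x) (proj K x) : ℝ) = 0 := by
    have hmem : x - proj K x ∈ Kᗮ := K.sub_starProjection_mem_orthogonal x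
    exact (Submodule.mem_orthogonal' K _).1 hmem _ (orthogonalProjection K x).2
  have := norm_add_sq_real (x - proj K x) (proj K x)
  rw [sub_add_cancel] at this
  rw [this, h0]; ring

lemma proj_sub_norm_le {E : Type*} [NormedAddCommGroup E] [InnerProductSpace ℝ E]
    [FiniteDimensional ℝ E] (K : Submodule ℝ E) (x : E) :
    ‖x - proj K x‖ ≤ ‖x‖ := by
  have h := proj_pythag K x
  nlinarith [norm_nonneg (x - proj K x), norm_nonneg x, sq_nonneg (‖proj K x‖)]

lemma proj_eq_zero_of_norm_eq {E : Type*} [NormedAddCommGroup E] [InnerProductSpace ℝ E]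
    [FiniteDimensional ℝ E] (K : Submodule ℝ E) (x : E) (h : ‖x - proj K x‖ = ‖x‖) :
    proj K x = 0 := by
  have hp := proj_pythag K x
  rw [h] at hp
  have : ‖proj K x‖ ^ 2 = 0 := by linarith
  have : ‖proj K x‖ = 0 := by nlinarith [norm_nonneg (proj K x)]
  simpa using this

theorem stmt1 {E : Type*} [NormedAddCommGroup E] [InnerProductSpace ℝ E] [FiniteDimensional ℝ E]
    (U V : Submodule ℝ E) :
    ∃ c : ℝ, 0 ≤ c ∧ c < 1 ∧ ∀ y ∈ U ⊔ V, ∀ k : ℕ,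
      ‖((((LinearMap.id - proj V) ∘ₗ (LinearMap.id - proj U) : Module.End ℝ E)) ^ k) y‖
        ≤ c ^ k * ‖y‖ := by
  classical
  set W : Submodule ℝ E := U ⊔ V with hW
  set T : Module.End ℝ E :=
    ((LinearMap.id - proj V) ∘ₗ (LinearMap.id - proj U) : Module.End ℝ E) with hT
  have hTapp : ∀ y : E, T y = (y - proj U y) - proj V (y - proj U y) := by
    intro y; simp [hT]
  have hTW : ∀ y ∈ W, T y ∈ W := by
    intro y hy
    rw [hTapp]
    have h1 : y - proj U y ∈ W :=
      W.sub_mem hy (le_sup_left (b := V) ((orthogonalProjection U y).2))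
    exact W.sub_mem h1 (le_sup_right (a := U) ((orthogonalProjection V _).2))
  have hTle : ∀ y : E, ‖T y‖ ≤ ‖y‖ := by
    intro y
    rw [hTapp]
    exact (proj_sub_norm_le V _).trans (proj_sub_norm_le U y)
  have hstrict : ∀ y ∈ W, y ≠ 0 → ‖T y‖ < ‖y‖ := by
    intro y hy hy0
    rcases lt_or_eq_of_le (hTle y) with h | h
    · exact h
    exfalso
    have h1 : ‖y - proj U y‖ = ‖y‖ := by
      have := proj_sub_norm_le U y
      have h2 : ‖T y‖ ≤ ‖y - proj U y‖ := by rw [hTapp]; exact proj_sub_norm_le V _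
      linarith
    have hPU : proj U y = 0 := proj_eq_zero_of_norm_eq U y h1
    have hTy : T y = y - proj V y := by rw [hTapp, hPU]; simp
    have h2 : ‖y - proj V y‖ = ‖y‖ := by rw [← hTy, h]
    have hPV : proj V y = 0 := proj_eq_zero_of_norm_eq V y h2
    have hyU : y ∈ Uᗮ := by
      have : orthogonalProjection U y = 0 := by
        have := hPU
        exact Submodule.coe_eq_zero.1 this
      exact Submodule.orthogonalProjectionOnto_eq_zero_iff.1 this
    have hyV : y ∈ Vᗮ := by
      have : orthogonalProjection V y = 0 := by
        exact Submodule.coe_eq_zero.1 hPV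
      exact Submodule.orthogonalProjectionOnto_eq_zero_iff.1 this
    have hyWo : y ∈ Wᗮ := by
      rw [hW, ← Submodule.inf_orthogonal]
      exact ⟨hyU, hyV⟩
    have : y = 0 := by
      have := Submodule.mem_orthogonal W y |>.1 hyWo y hy
      simpa using inner_self_eq_zero.1 this
    exact hy0 this
  by_cases hbot : W = ⊥
  · refine ⟨1/2, by norm_num, by norm_num, fun y hy k => ?_⟩
    have hy0 : y = 0 := by
      rw [hbot] at hy; simpa using hy
    simp [hy0]
  · -- compactness on the unit sphere of W
    obtain ⟨e, heW, he0⟩ := Submodule.exists_mem_ne_zero_of_ne_bot hbot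
    have hnS : (Metric.sphere (0 : W) 1).Nonempty := by
      refine ⟨‖e‖⁻¹ • ⟨e, heW⟩, ?_⟩
      have he0' : ‖e‖ ≠ 0 := norm_ne_zero_iff.2 he0
      simp [norm_smul, Submodule.norm_coe, abs_of_nonneg (norm_nonneg e)]
      · rw [inv_mul_cancel₀]
        simpa using he0'
    have hcont : Continuous fun w : W => ‖T (w : E)‖ := by
      have : Continuous T := T.continuous_of_finiteDimensional
      exact (this.comp continuous_subtype_val).norm
    obtain ⟨w₀, hw₀S, hmax⟩ := (isCompact_sphere (0 : W) 1).exists_isMaxOn hnS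
      hcont.continuousOn
    set c : ℝ := ‖T (w₀ : E)‖ with hc
    have hw₀norm : ‖(w₀ : E)‖ = 1 := by
      have := mem_sphere_zero_iff_norm.1 hw₀S
      simpa using this
    have hw₀0 : (w₀ : E) ≠ 0 := by
      intro h; rw [h] at hw₀norm; simpa using hw₀norm
    have hc0 : 0 ≤ c := norm_nonneg _
    have hc1 : c < 1 := by
      have := hstrict (w₀ : E) w₀.2 hw₀0
      rwa [hw₀norm] at this
    have hstep : ∀ y ∈ W, ‖T y‖ ≤ c * ‖y‖ := by
      intro y hy
      by_cases hy0 : y = 0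
      · simp [hy0]
      have hn0 : ‖y‖ ≠ 0 := norm_ne_zero_iff.2 hy0
      set w : W := ‖y‖⁻¹ • ⟨y, hy⟩ with hw
      have hwS : w ∈ Metric.sphere (0 : W) 1 := by
        rw [mem_sphere_zero_iff_norm]
        simp [hw, norm_smul, Submodule.norm_coe, abs_of_nonneg (norm_nonneg y)]
        rw [inv_mul_cancel₀]; simpa using hn0
      have := hmax hwS
      simp only [Set.mem_setOf_eq] at this
      have hcoe : (w : E) = ‖y‖⁻¹ • y := rfl
      rw [hcoe, map_smul, norm_smul, norm_inv, norm_norm] at this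
      calc ‖T y‖ = ‖y‖ * (‖y‖⁻¹ * ‖T y‖) := by field_simp
        _ ≤ ‖y‖ * c := by
            exact mul_le_mul_of_nonneg_left this (norm_nonneg y)
        _ = c * ‖y‖ := mul_comm _ _
    refine ⟨c, hc0, hc1, ?_⟩
    intro y hy k
    induction k generalizing y with
    | zero => simpa using le_refl ‖y‖
    | succ n ih =>
      have hTy : T y ∈ W := hTW y hy
      have h1 : (T ^ (n + 1)) y = (T ^ n) (T y) := by
        rw [pow_succ]; rfl
      rw [h1]
      calc ‖(T ^ n) (T y)‖ ≤ c ^ n * ‖T y‖ := ih (T y) hTy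
        _ ≤ c ^ n * (c * ‖y‖) :=
            mul_le_mul_of_nonneg_left (hstep y hy) (pow_nonneg hc0 n)
        _ = c ^ (n + 1) * ‖y‖ := by ring
end

section
/- Let U, V be subspaces of a finite-dimensional real inner product space with orthogonal projections P_A, P_B, and set T = (I - P_B)(I - P_A). Then for every y, the limit of T^k y as k → ∞ exists, and y minus this limit lies in U + V. -/
open Submodule Filter Topology

/-!
Since `I - P_U` is the orthogonal projection onto `Uᗮ`, the iterated map is `P_{Vᗮ} P_{Uᗮ}`.
For subspaces `A`, `B` and `K = A ⊓ B`, the map `P_B P_A` fixes `K` pointwise, maps `Kᗮ` into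
itself and strictly shrinks every nonzero vector of `Kᗮ`, because `‖P_B P_A x‖ = ‖x‖` forces
`x ∈ A` and then `x ∈ B`. By compactness of the unit sphere its norm on `Kᗮ` is `< 1`, so
`(P_B P_A)^k y → P_K y`. For `A = Uᗮ`, `B = Vᗮ` we have `K = (U ⊔ V)ᗮ`, so `y - P_K y ∈ U ⊔ V`.
-/

section StrictContraction

variable {𝕜 F : Type*} [RCLike 𝕜] [NormedAddCommGroup F] [NormedSpace 𝕜 F]
  [FiniteDimensional 𝕜 F]

theorem ContinuousLinearMap.opNorm_lt_one_of_norm_apply_lt_s9 (f : F →L[𝕜] F)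
    (hf : ∀ x ≠ 0, ‖f x‖ < ‖x‖) : ‖f‖ < 1 := by
  have := FiniteDimensional.proper_rclike 𝕜 F
  rcases subsingleton_or_nontrivial F with hF | hF
  · simp [Subsingleton.elim f 0]
  obtain ⟨x₀, hx₀, hmax⟩ := (isCompact_sphere (0 : F) 1).exists_isMaxOn
    (Set.nonempty_coe_sort.mp (NormedSpace.sphere_nonempty_rclike 𝕜 zero_le_one))
    (continuous_norm.comp f.continuous).continuousOn
  have hx₀ : ‖x₀‖ = 1 := mem_sphere_zero_iff_norm.mp hx₀
  calc ‖f‖ ≤ ‖f x₀‖ :=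
        f.opNorm_le_of_unit_norm (norm_nonneg _) fun x hx ↦ hmax (mem_sphere_zero_iff_norm.mpr hx)
    _ < ‖x₀‖ := hf x₀ (norm_ne_zero_iff.mp (by simp [hx₀]))
    _ = 1 := hx₀

theorem Module.End.tendsto_pow_apply_zero_of_norm_apply_lt (f : Module.End 𝕜 F)
    (hf : ∀ x ≠ 0, ‖f x‖ < ‖x‖) (x : F) :
    Tendsto (fun k : ℕ ↦ (f ^ k) x) atTop (𝓝 0) := by
  set g := LinearMap.toContinuousLinearMap f
  have hg : ‖g‖ < 1 := g.opNorm_lt_one_of_norm_apply_lt_s9 hf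
  have hlim := ((ContinuousLinearMap.apply 𝕜 F x).continuous.tendsto 0).comp
    (tendsto_pow_atTop_nhds_zero_of_norm_lt_one hg)
  rw [map_zero] at hlim
  refine hlim.congr fun k ↦ ?_
  change (g ^ k) x = (f ^ k) x
  rw [FunLike.coe_pow_eq_iterate, Module.End.coe_pow]
  rfl

end StrictContraction

namespace Submodule

variable {𝕜 E : Type*} [RCLike 𝕜] [NormedAddCommGroup E] [InnerProductSpace 𝕜 E]

theorem starProjection_mem_orthogonal_of_le {K A : Submodule 𝕜 E} [A.HasOrthogonalProjection]
    (hKA : K ≤ A) {x : E} (hx : x ∈ Kᗮ) : A.starProjection x ∈ Kᗮ := by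
  simpa using Kᗮ.sub_mem hx (orthogonal_le hKA (A.sub_starProjection_mem_orthogonal x))

theorem norm_starProjection_starProjection_lt {A B : Submodule 𝕜 E} [A.HasOrthogonalProjection]
    [B.HasOrthogonalProjection] {x : E} (hx : x ∈ (A ⊓ B)ᗮ) (hx₀ : x ≠ 0) :
    ‖B.starProjection (A.starProjection x)‖ < ‖x‖ := by
  by_contra! h
  have hA : ‖A.starProjection x‖ = ‖x‖ :=
    le_antisymm (A.norm_starProjection_apply_le x) (h.trans (B.norm_starProjection_apply_le _))
  have hxA : x ∈ A := (A.mem_iff_norm_starProjection x).mpr hA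
  rw [starProjection_eq_self_iff.mpr hxA] at h
  have hxB : x ∈ B := (B.mem_iff_norm_starProjection x).mpr <|
    le_antisymm (B.norm_starProjection_apply_le x) h
  have : x ∈ (A ⊓ B) ⊓ (A ⊓ B)ᗮ := ⟨⟨hxA, hxB⟩, hx⟩
  rw [inf_orthogonal_eq_bot, mem_bot] at this
  exact hx₀ this

variable [FiniteDimensional 𝕜 E]

/-- The finite-dimensional case of von Neumann's alternating projection theorem. -/
theorem tendsto_pow_starProjection_comp_apply (A B : Submodule 𝕜 E) (y : E) :
    Tendsto (fun k : ℕ ↦ ((B.starProjection ∘L A.starProjection) ^ k) y) atTop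
      (𝓝 ((A ⊓ B).starProjection y)) := by
  set T := B.starProjection ∘L A.starProjection
  set K := A ⊓ B
  have hfix : T (K.starProjection y) = K.starProjection y := by
    have hy := K.starProjection_apply_mem y
    simp [T, starProjection_eq_self_iff.mpr hy.1, starProjection_eq_self_iff.mpr hy.2]
  have hinv : ∀ x ∈ Kᗮ, T x ∈ Kᗮ := fun x hx ↦
    starProjection_mem_orthogonal_of_le inf_le_right
      (starProjection_mem_orthogonal_of_le inf_le_left hx)
  set S := (T : Module.End 𝕜 E).restrict hinv
  have hS : ∀ x ≠ 0, ‖S x‖ < ‖x‖ := fun x hx ↦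
    norm_starProjection_starProjection_lt x.2 (by simpa using hx)
  have hS_pow : ∀ (k : ℕ) (z : Kᗮ), ((S ^ k) z : E) = (T ^ k) z := by
    intro k z
    rw [Module.End.pow_restrict, LinearMap.coe_restrict_apply,
      ← ContinuousLinearMap.toLinearMap_pow]
    rfl
  set z : Kᗮ := ⟨Kᗮ.starProjection y, Kᗮ.starProjection_apply_mem y⟩
  have hpow : ∀ k : ℕ, (T ^ k) y = ((S ^ k) z : E) + K.starProjection y := by
    intro k
    conv_lhs => rw [← K.starProjection_add_starProjection_orthogonal y]
    rw [map_add, add_comm, FunLike.coe_pow_eq_iterate T, Function.iterate_fixed hfix,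
      hS_pow, FunLike.coe_pow_eq_iterate T]
  have hSz : Tendsto (fun k : ℕ ↦ ((S ^ k) z : E)) atTop (𝓝 0) :=
    (continuous_subtype_val.tendsto' 0 0 rfl).comp
      (Module.End.tendsto_pow_apply_zero_of_norm_apply_lt S hS z)
  simpa only [hpow, zero_add] using hSz.add_const (K.starProjection y)

end Submodule

theorem id_sub_proj {E : Type*} [NormedAddCommGroup E] [InnerProductSpace ℝ E]
    [FiniteDimensional ℝ E] (K : Submodule ℝ E) :
    LinearMap.id - proj K = (Kᗮ.starProjection : E →ₗ[ℝ] E) := by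
  rw [starProjection_orthogonal]
  rfl

theorem stmt9 {E : Type*} [NormedAddCommGroup E] [InnerProductSpace ℝ E] [FiniteDimensional ℝ E]
    (U V : Submodule ℝ E) (y : E) :
    ∃ L : E, Tendsto (fun k : ℕ =>
        ((((LinearMap.id - proj V) ∘ₗ (LinearMap.id - proj U) : Module.End ℝ E)) ^ k) y)
      atTop (𝓝 L) ∧ y - L ∈ U ⊔ V := by
  refine ⟨(Uᗮ ⊓ Vᗮ).starProjection y, ?_, ?_⟩
  · convert tendsto_pow_starProjection_comp_apply Uᗮ Vᗮ y using 2 with k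
    rw [id_sub_proj, id_sub_proj, ← ContinuousLinearMap.toLinearMap_comp,
      ← ContinuousLinearMap.toLinearMap_pow]
    rfl
  · have hperp : (Uᗮ ⊓ Vᗮ)ᗮ = U ⊔ V := by rw [inf_orthogonal, orthogonal_orthogonal]
    exact hperp ▸ sub_starProjection_mem_orthogonal y
end

section
/- Let U₁, …, U_m be subspaces of a finite-dimensional real inner product space with orthogonal projections P₁, …, P_m, and let T = (I - P_m) ⋯ (I - P₁). Then T^k y converges, as k → ∞, to the orthogonal projection of y onto the orthogonal complement of U₁ + ⋯ + U_m. -/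
/-!
Let `T` be the product of the projections onto `Wᵢ = Uᵢᗮ` and `P` the projection onto
`V = ⋂ Wᵢ = (U₁ + ⋯ + Uₘ)ᗮ`. Every factor fixes `V` and is absorbed by `P`, so `P T = T P = P`
and hence `T ^ (k + 1) - P = (T - P) ^ (k + 1)`. A product of orthogonal projections preserves the
norm of `x` only if every factor fixes `x`; thus `T - P = T (1 - P)` strictly shrinks every nonzero
vector, by compactness of the unit sphere `‖T - P‖ < 1`, and `(T - P) ^ k → 0`.
-/

open Submodule Filter Topology

theorem ContinuousLinearMap.opNorm_lt_one_of_norm_apply_lt_s15 {𝕜 E F : Type*} [RCLike 𝕜]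
    [NormedAddCommGroup E] [NormedSpace 𝕜 E] [FiniteDimensional 𝕜 E]
    [SeminormedAddCommGroup F] [NormedSpace 𝕜 F]
    (f : E →L[𝕜] F) (hf : ∀ x ≠ 0, ‖f x‖ < ‖x‖) : ‖f‖ < 1 := by
  cases subsingleton_or_nontrivial E
  · simp [Subsingleton.elim f 0]
  have := FiniteDimensional.proper_rclike 𝕜 E
  obtain ⟨x₀, hx₀, hmax⟩ := (isCompact_sphere (0 : E) 1).exists_isMaxOn
    (Set.nonempty_coe_sort.1 (NormedSpace.sphere_nonempty_rclike 𝕜 zero_le_one))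
    (continuous_norm.comp f.continuous).continuousOn
  rw [mem_sphere_zero_iff_norm] at hx₀
  calc ‖f‖ ≤ ‖f x₀‖ :=
        opNorm_le_of_unit_norm (norm_nonneg _) fun x hx => hmax (mem_sphere_zero_iff_norm.2 hx)
    _ < 1 := hx₀ ▸ hf x₀ (norm_ne_zero_iff.1 (hx₀ ▸ one_ne_zero))

theorem IsIdempotentElem.sub_pow_succ_of_mul_eq {R : Type*} [Ring R] {t p : R}
    (hp : IsIdempotentElem p) (hpt : p * t = p) (htp : t * p = p) (n : ℕ) :
    (t - p) ^ (n + 1) = t ^ (n + 1) - p := by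
  have htnp : ∀ k : ℕ, t ^ k * p = p := fun k => by
    induction k with
    | zero => rw [pow_zero, one_mul]
    | succ k ih => rw [pow_succ, mul_assoc, htp, ih]
  induction n with
  | zero => rw [zero_add, pow_one, pow_one]
  | succ n ih =>
    rw [pow_succ, ih, sub_mul, mul_sub, mul_sub, ← pow_succ, htnp, hpt, hp.eq]
    abel

namespace Submodule

variable {𝕜 E : Type*} [RCLike 𝕜] [NormedAddCommGroup E] [InnerProductSpace 𝕜 E]
  [FiniteDimensional 𝕜 E]

noncomputable def prodStarProjection (l : List (Submodule 𝕜 E)) : E →L[𝕜] E :=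
  (l.map (·.starProjection)).prod

@[simp]
theorem prodStarProjection_cons (W : Submodule 𝕜 E) (l : List (Submodule 𝕜 E)) :
    prodStarProjection (W :: l) = W.starProjection * prodStarProjection l := rfl

variable (l : List (Submodule 𝕜 E))

theorem prodStarProjection_apply_of_forall_mem {x : E} (hx : ∀ W ∈ l, x ∈ W) :
    prodStarProjection l x = x := by
  induction l with
  | nil => rfl
  | cons W l ih =>
    simp only [prodStarProjection_cons, mul_apply_eq_comp,
      ih fun V hV => hx V (List.mem_cons_of_mem W hV)]
    exact starProjection_eq_self_iff.2 (hx W List.mem_cons_self)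

theorem norm_prodStarProjection_apply_le (x : E) :
    ‖prodStarProjection l x‖ ≤ ‖x‖ := by
  induction l with
  | nil => rfl
  | cons W l ih =>
    rw [prodStarProjection_cons, mul_apply_eq_comp]
    exact (W.norm_starProjection_apply_le _).trans ih

theorem forall_mem_of_norm_prodStarProjection_apply_eq {x : E}
    (hx : ‖prodStarProjection l x‖ = ‖x‖) : ∀ W ∈ l, x ∈ W := by
  induction l with
  | nil => simp
  | cons W l ih =>
    rw [prodStarProjection_cons, mul_apply_eq_comp] at hx
    have hl : ‖prodStarProjection l x‖ = ‖x‖ :=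
      le_antisymm (norm_prodStarProjection_apply_le l x)
        (hx ▸ W.norm_starProjection_apply_le _)
    have hxl := ih hl
    rw [prodStarProjection_apply_of_forall_mem l hxl] at hx
    exact List.forall_mem_cons.2 ⟨(W.mem_iff_norm_starProjection x).2 hx, hxl⟩

theorem starProjection_mul_prodStarProjection {V : Submodule 𝕜 E}
    (hV : ∀ W ∈ l, V ≤ W) : V.starProjection * prodStarProjection l = V.starProjection := by
  induction l with
  | nil => exact mul_one _
  | cons W l ih =>
    have hVW : V.starProjection * W.starProjection = V.starProjection :=
      starProjection_comp_starProjection_of_le (hV W List.mem_cons_self)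
    rw [prodStarProjection_cons, ← mul_assoc, hVW,
      ih fun U hU => hV U (List.mem_cons_of_mem W hU)]

theorem prodStarProjection_mul_starProjection_iInf :
    prodStarProjection l * (⨅ W ∈ l, W).starProjection = (⨅ W ∈ l, W).starProjection := by
  ext x
  refine prodStarProjection_apply_of_forall_mem l fun W hW => ?_
  exact iInf₂_le (f := fun W (_ : W ∈ l) => W) W hW (starProjection_apply_mem _ x)

theorem norm_prodStarProjection_sub_starProjection_iInf_apply_lt {x : E} (hx : x ≠ 0) :
    ‖(prodStarProjection l - (⨅ W ∈ l, W).starProjection) x‖ < ‖x‖ := by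
  set V := ⨅ W ∈ l, W
  set q := Vᗮ.starProjection x
  have hR : prodStarProjection l - V.starProjection = prodStarProjection l * Vᗮ.starProjection := by
    rw [starProjection_orthogonal', mul_sub, mul_one, prodStarProjection_mul_starProjection_iInf]
  suffices ‖prodStarProjection l q‖ < ‖x‖ by rwa [hR, mul_apply_eq_comp]
  by_contra! h
  have hTq : ‖prodStarProjection l q‖ = ‖q‖ :=
    le_antisymm (norm_prodStarProjection_apply_le l q) ((norm_starProjection_apply_le _ x).trans h)
  have hqV : q ∈ V := by
    simpa only [V, mem_iInf] using forall_mem_of_norm_prodStarProjection_apply_eq l hTq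
  have hq : q = 0 := inner_self_eq_zero.1 (starProjection_apply_mem Vᗮ x q hqV)
  rw [hq, map_zero, norm_zero, norm_le_zero_iff] at h
  exact hx h

theorem tendsto_pow_prodStarProjection :
    Tendsto (fun k => prodStarProjection l ^ k) atTop (𝓝 (⨅ W ∈ l, W).starProjection) := by
  set V := ⨅ W ∈ l, W
  set T := prodStarProjection l
  have hR : ‖T - V.starProjection‖ < 1 :=
    ContinuousLinearMap.opNorm_lt_one_of_norm_apply_lt_s15 _ fun x hx =>
      norm_prodStarProjection_sub_starProjection_iInf_apply_lt l hx
  have hpow (n : ℕ) : T ^ (n + 1) = V.starProjection + (T - V.starProjection) ^ (n + 1) := by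
    rw [(isIdempotentElem_starProjection V).sub_pow_succ_of_mul_eq
      (starProjection_mul_prodStarProjection l fun W hW => iInf₂_le W hW)
      (prodStarProjection_mul_starProjection_iInf l), add_sub_cancel]
  rw [← tendsto_add_atTop_iff_nat 1]
  simp only [hpow]
  simpa using tendsto_const_nhds.add
    ((tendsto_pow_atTop_nhds_zero_of_norm_lt_one hR).comp (tendsto_add_atTop_nat 1))

end Submodule

theorem proj_eq_toLinearMapRingHom_starProjection {E : Type*} [NormedAddCommGroup E]
    [InnerProductSpace ℝ E] [FiniteDimensional ℝ E] (U : Submodule ℝ E) :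
    proj U = ContinuousLinearMap.toLinearMapRingHom U.starProjection := rfl

theorem stmt15 {E : Type*} [NormedAddCommGroup E] [InnerProductSpace ℝ E] [FiniteDimensional ℝ E]
    {m : ℕ} (U : Fin m → Submodule ℝ E) (y : E) :
    Tendsto (fun k : ℕ =>
        (((List.ofFn fun i : Fin m =>
            ((1 : Module.End ℝ E) - proj (U i))).reverse.prod ^ k)) y)
      atTop (𝓝 (proj (⨆ i, U i)ᗮ y)) := by
  set l := (List.ofFn fun i => (U i)ᗮ).reverse
  have hV : (⨆ i, U i)ᗮ = ⨅ W ∈ l, W := by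
    ext x
    simp [l, ← iInf_orthogonal]
  have hT : (List.ofFn fun i => (1 : Module.End ℝ E) - proj (U i)).reverse.prod =
      ContinuousLinearMap.toLinearMapRingHom (prodStarProjection l) := by
    simp only [proj_eq_toLinearMapRingHom_starProjection, ← map_one
      ContinuousLinearMap.toLinearMapRingHom, ← map_sub, ← starProjection_orthogonal']
    rw [prodStarProjection, map_list_prod, List.map_map, List.map_reverse, List.map_ofFn]
    rfl
  rw [hT, hV, proj_eq_toLinearMapRingHom_starProjection]
  simp only [← map_pow]
  exact ((ContinuousLinearMap.apply ℝ E y).continuous.tendsto _).comp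
    (tendsto_pow_prodStarProjection l)
end
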